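/- arXiv:1009.0234 — 2 statements merged into one kernel-verified Lean document; each statement's English description precedes it below -/
import Mathlib

section
/- Let Λ and X be sets, U the enlargement ultrafilter on the index set I of finite subsets, and A : Λ → Set(*X) a family where each A_λ = *(α_λ) is the ultrapower extension of a subset α_λ ⊆ X. If every finite subfamily has nonempty intersection (equivalently, the α_λ have the finite intersection property), then ⋂_{λ∈Λ} A_λ is nonempty. -/
open Filter

/-- The ultrapower extension `*α ⊆ *X` of a subset `α ⊆ X`: germs lying
`U`-almost everywhere in `α`. -/
def starSet {I X : Type*} (U : Ultrafilter I) (α : Set X) :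
    Set (Germ (U : Filter I) X) :=
  {a | a.LiftPred (· ∈ α)}

/-- compactness/enlargement: if `U` is an ultrafilter on the set
of finite subsets of `Λ` containing every `Γ_μ = {β : μ ⊆ β}`, and
`{α_λ}_{λ ∈ Λ}` is a family of subsets of `X` with the finite intersection
property, then `⋂_{λ} *(α_λ)` is nonempty. -/
theorem compactness {Λ X : Type*} (U : Ultrafilter (Finset Λ))
    (hU : ∀ μ : Finset Λ, {β : Finset Λ | μ ⊆ β} ∈ U)
    (α : Λ → Set X)
    (hfip : ∀ F : Finset Λ, (⋂ l ∈ F, α l).Nonempty) :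
    (⋂ l : Λ, starSet U (α l)).Nonempty := by
  choose x hx using hfip
  refine ⟨(↑(x : Finset Λ → X) : Germ (U : Filter (Finset Λ)) X), ?_⟩
  refine Set.mem_iInter.2 fun l => ?_
  show (↑x : Germ (U : Filter (Finset Λ)) X).LiftPred (· ∈ α l)
  rw [Germ.liftPred_coe]
  filter_upwards [hU {l}] with β hβ
  have := hx β
  exact Set.mem_iInter₂.1 this l (hβ (Finset.mem_singleton_self l))
end

section
/- If a duplicated category of sets satisfies the compactness axiom, then for every infinite set X, the ultraextension *X contains a nonstandard element, i.e., an element not in the image of the standard embedding ι_X : X → *X. -/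
open Filter

/-- For an infinite set `X` and an enlargement ultrafilter `U` on
the finite subsets of `X` (containing every `Γ_μ = {β : μ ⊆ β}`), the
ultrapower `*X` contains a nonstandard element, i.e. a germ not in the image of
the diagonal embedding. -/
theorem exists_nonstandard_element {X : Type*} (hX : Infinite X)
    (U : Ultrafilter (Finset X))
    (hU : ∀ μ : Finset X, {β : Finset X | μ ⊆ β} ∈ U) :
    ∃ ξ : Germ (U : Filter (Finset X)) X,
      ∀ x : X, ξ ≠ (↑x : Germ (U : Filter (Finset X)) X) := by
  have hf : ∀ β : Finset X, ∃ y : X, y ∉ β := fun β =>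
    Infinite.exists_notMem_finset β
  choose f hfspec using hf
  refine ⟨Germ.ofFun f, fun x hx => ?_⟩
  have h := Germ.coe_eq.mp hx
  have h2 : {β : Finset X | f β = x} ∩ {β : Finset X | {x} ⊆ β} ∈ U :=
    Filter.inter_mem h (hU {x})
  rcases (U : Filter (Finset X)).nonempty_of_mem h2 with ⟨β, hβ1, hβ2⟩
  exact hfspec β (hβ1 ▸ hβ2 (Finset.mem_singleton_self x))
end
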